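/- Let k be a finite field and let Γ = SL_2(k) (a finite group) act on V = k² by matrix–vector multiplication. Then there is a real constant A > 0 such that A·2^n ≤ s_n(Γ,V) ≤ 2^n for all n ∈ ℕ; that is, s_n(Γ,V) ∈ Θ'(2^n). -/

import Mathlib

open scoped TensorProduct

/-- `sN k ρ n` is the supremum of the cardinalities of finite families of nonzero
invariant subspaces of `V^{⊗n}` (with the diagonal action induced by `ρ`) forming an
internal direct sum decomposition of `V^{⊗n}`; i.e. the number of indecomposable direct
summands of `V^{⊗n}` counted with multiplicity. -/
noncomputable def sN (k : Type*) [Field k] {Γ V : Type*} [AddCommGroup V] [Module k V]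
    (ρ : Γ → (V →ₗ[k] V)) (n : ℕ) : ℕ :=
  sSup {m : ℕ | ∃ W : Fin m → Submodule k (⨂[k]^n V),
    (∀ i, W i ≠ ⊥) ∧
    (∀ i (g : Γ), ∀ x ∈ W i, (PiTensorProduct.map fun _ : Fin n => ρ g) x ∈ W i) ∧
    DirectSum.IsInternal W}

/-!
For every non-scalar `u ∈ Γ` pick `x_u ∈ V` and `μ_u ∈ V^*` with `μ_u x_u = 1` and
`μ_u (u x_u) = 0`; let `m` be the number of such `u`. On `V^{⊗(m+r)}`, for each of the
`(dim V)^r` multi-indices `J`, let `θ_J = (μ_{u_1} ⊗ ⋯ ⊗ μ_{u_m} ⊗ e_J^*) · (x_{u_1} ⊗ ⋯ ⊗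
x_{u_m} ⊗ e_J)`, a rank-one idempotent. Then `θ_J u θ_{J'} = 0` for every non-scalar `u`,
because its `u`-th tensor factor vanishes, while the scalars `Z` act centrally. Hence the
averages `|Z|⁻¹ ∑_{g ∈ Γ} g θ_J g⁻¹` are `(dim V)^r` nonzero orthogonal idempotents commuting
with `Γ`; their images, together with the image of the complementary idempotent, decompose
`V^{⊗(m+r)}`, so `s_{m+r} ≥ (dim V)^r`. The upper bound is `dim V^{⊗n}`.
For `SL_2(k)` the scalars are `±1`, and `|{±1}| = 2` forces `-1 ≠ 1`, i.e. `2 ≠ 0` in `k`.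
-/

open Module DirectSum Finset

noncomputable section

theorem CompleteOrthogonalIdempotents.isInternal_range {R M ι : Type*} [Ring R] [AddCommGroup M]
    [Module R M] [Fintype ι] [DecidableEq ι] {e : ι → Module.End R M}
    (he : CompleteOrthogonalIdempotents e) : IsInternal fun i => LinearMap.range (e i) := by
  rw [isInternal_submodule_iff_iSupIndep_and_iSup_eq_top]
  refine ⟨iSupIndep_def.mpr fun i => ?_, eq_top_iff.mpr fun x _ => ?_⟩
  · refine (LinearMap.IsIdempotentElem.isCompl (he.idem i)).disjoint.mono_right ?_
    refine iSup₂_le fun j hji => ?_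
    rintro _ ⟨y, rfl⟩
    exact congr($(he.ortho hji.symm) y)
  · have hx : ∑ i, e i x = x := by simpa using congr($(he.complete) x)
    rw [← hx]
    exact Submodule.sum_mem _ fun i _ => Submodule.mem_iSup_of_mem i ⟨x, rfl⟩

theorem DirectSum.IsInternal.comp_equiv {R M ι ι' : Type*} [Ring R] [AddCommGroup M] [Module R M]
    [DecidableEq ι] [DecidableEq ι'] {W : ι → Submodule R M} (hW : IsInternal W)
    (e : ι' ≃ ι) : IsInternal (W ∘ e) := by
  rw [isInternal_submodule_iff_iSupIndep_and_iSup_eq_top] at hW ⊢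
  exact ⟨hW.1.comp e.injective, (e.iSup_comp (g := W)).trans hW.2⟩

theorem card_le_finrank_of_isInternal {K M ι : Type*} [DivisionRing K] [AddCommGroup M]
    [Module K M] [FiniteDimensional K M] [Fintype ι] [DecidableEq ι] {W : ι → Submodule K M}
    (hne : ∀ i, W i ≠ ⊥) (hW : IsInternal W) : Fintype.card ι ≤ finrank K M := by
  have := hW.submodule_iSupIndep.subtype_ne_bot_le_finrank
  rwa [Fintype.card_congr (Equiv.subtypeUnivEquiv hne)] at this

theorem finrank_tensorPower {k V : Type*} [Field k] [AddCommGroup V] [Module k V]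
    [FiniteDimensional k V] (n : ℕ) : finrank k (⨂[k]^n V) = finrank k V ^ n := by
  simp [finrank_eq_card_basis (Basis.piTensorProduct fun _ : Fin n => Module.finBasis k V)]

namespace sN

variable {k Γ V : Type*} [Field k] [AddCommGroup V] [Module k V] (ρ : Γ → V →ₗ[k] V)
  (n : ℕ)

theorem le_finrank_pow [FiniteDimensional k V] : sN k ρ n ≤ finrank k V ^ n := by
  rw [← finrank_tensorPower]
  refine csSup_le' ?_
  rintro m ⟨W, hne, -, hW⟩
  simpa using card_le_finrank_of_isInternal hne hW

variable {ρ n}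

theorem card_le_of_isInternal [FiniteDimensional k V] {ι : Type*} [Fintype ι] [DecidableEq ι]
    {W : ι → Submodule k (⨂[k]^n V)} (hne : ∀ i, W i ≠ ⊥)
    (hinv : ∀ i g, ∀ x ∈ W i, PiTensorProduct.map (fun _ => ρ g) x ∈ W i)
    (hW : IsInternal W) : Fintype.card ι ≤ sN k ρ n := by
  refine le_csSup ⟨finrank k (⨂[k]^n V), fun m hm => ?_⟩
    ⟨W ∘ (Fintype.equivFin ι).symm, fun i => hne _, fun i g => hinv _ g, hW.comp_equiv _⟩
  obtain ⟨W', hne', -, hW'⟩ := hm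
  simpa using card_le_finrank_of_isInternal hne' hW'

theorem card_le_of_orthogonalIdempotents [FiniteDimensional k V] {ι : Type*} [Fintype ι]
    {e : ι → Module.End k (⨂[k]^n V)} (he : OrthogonalIdempotents e) (hne : ∀ i, e i ≠ 0)
    (hcomm : ∀ i g, Commute (e i) (PiTensorProduct.map fun _ => ρ g)) :
    Fintype.card ι ≤ sN k ρ n := by
  classical
  set e' : Option ι → Module.End k (⨂[k]^n V) := (Option.elim · (1 - ∑ i, e i) e)
  have hcomm' : ∀ o g, Commute (e' o) (PiTensorProduct.map fun _ => ρ g)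
    | none, g => (Commute.one_left _).sub_left (.sum_left _ _ _ fun i _ => hcomm i g)
    | some i, g => hcomm i g
  have hsome : ∀ i, LinearMap.range (e' (some i)) ≠ ⊥ := fun i => by
    simpa [e', LinearMap.range_eq_bot] using hne i
  calc Fintype.card ι
      ≤ Fintype.card {o // LinearMap.range (e' o) ≠ ⊥} :=
        Fintype.card_le_of_injective (fun i => ⟨some i, hsome i⟩) fun i j h => by simpa using h
    _ ≤ sN k ρ n := by
      refine card_le_of_isInternal (fun o => o.2) (fun o g => ?_)
        (isInternal_ne_bot_iff.mpr (CompleteOrthogonalIdempotents.option he).isInternal_range)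
      rintro _ ⟨y, rfl⟩
      exact ⟨PiTensorProduct.map (fun _ => ρ g) y, congr($((hcomm' o g).eq) y)⟩

theorem one_le [FiniteDimensional k V] [Nontrivial V] : 1 ≤ sN k ρ n := by
  have : Nontrivial (⨂[k]^n V) :=
    Module.nontrivial_of_finrank_pos (by rw [finrank_tensorPower]; exact pow_pos finrank_pos n)
  simpa using card_le_of_orthogonalIdempotents (ι := Unit) (OrthogonalIdempotents.unique.mpr .one)
    (e := fun _ => 1) (fun _ => one_ne_zero) (fun _ _ => Commute.one_left _)

end sN

section MapInv

variable {M G : Type*} [Monoid M] [Group G] (ρ : G →* M)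

@[simp] lemma MonoidHom.map_inv_mul_map (g : G) : ρ g⁻¹ * ρ g = 1 := by
  rw [← map_mul, inv_mul_cancel, map_one]

@[simp] lemma MonoidHom.map_mul_map_inv (g : G) : ρ g * ρ g⁻¹ = 1 := by
  simpa using ρ.map_inv_mul_map g⁻¹

@[simp] lemma MonoidHom.map_inv_mul_map_mul (g : G) (x : M) : ρ g⁻¹ * (ρ g * x) = x := by
  rw [← mul_assoc, ρ.map_inv_mul_map, one_mul]

@[simp] lemma MonoidHom.map_mul_map_inv_mul (g : G) (x : M) : ρ g * (ρ g⁻¹ * x) = x := by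
  rw [← mul_assoc, ρ.map_mul_map_inv, one_mul]

end MapInv

section ConjAverage

variable {A G : Type*} [Ring A] [Group G] [Fintype G] (ρ : G →* A)

def conjAverage (a : A) : A := ∑ g, ρ g * a * ρ g⁻¹

theorem commute_conjAverage (h : G) (a : A) : Commute (ρ h) (conjAverage ρ a) := by
  simp only [Commute, SemiconjBy, conjAverage, mul_sum, sum_mul]
  refine Fintype.sum_equiv (Equiv.mulLeft h) _ _ fun g => ?_
  simp [mul_assoc]

theorem conjAverage_mul_conjAverage (a b : A) :
    conjAverage ρ a * conjAverage ρ b = conjAverage ρ (∑ u, a * ρ u * b * ρ u⁻¹) := by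
  rw [conjAverage, conjAverage, sum_mul_sum, conjAverage]
  simp only [mul_sum, sum_mul]
  refine sum_congr rfl fun g _ => Fintype.sum_equiv (Equiv.mulLeft g⁻¹) _ _ fun h => ?_
  simp [mul_assoc]

theorem sum_mul_map_mul_mul_map_inv {Z : Finset G} (hZ : ∀ z ∈ Z, ∀ x, Commute (ρ z) x)
    {a b : A} (hab : ∀ u ∉ Z, a * ρ u * b = 0) :
    ∑ u, a * ρ u * b * ρ u⁻¹ = #Z • (a * b) := by
  rw [← sum_subset (subset_univ Z) fun u _ hu => by rw [hab u hu, zero_mul], ← sum_const]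
  refine sum_congr rfl fun z hz => ?_
  rw [mul_assoc a, (hZ z hz b).eq]
  simp [mul_assoc]

end ConjAverage

section

variable {k A G ι : Type*} [Field k] [Ring A] [Algebra k A] [Group G] [Fintype G] (ρ : G →* A)
  {Z : Finset G} (hZ : ∀ z ∈ Z, ∀ x, Commute (ρ z) x) (hZk : (#Z : k) ≠ 0)
include hZ hZk

theorem conjAverage_ne_zero {θ : A} (hθ : IsIdempotentElem θ)
    (hvan : ∀ u ∉ Z, θ * ρ u * θ = 0) (hne : θ ≠ 0) : conjAverage ρ θ ≠ 0 := by
  intro h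
  have : θ * conjAverage ρ θ = (#Z : k) • θ := by
    simp only [conjAverage, mul_sum, ← mul_assoc]
    rw [sum_mul_map_mul_mul_map_inv ρ hZ hvan, hθ.eq, Nat.cast_smul_eq_nsmul]
  rw [h, mul_zero, eq_comm, smul_eq_zero] at this
  exact this.elim hZk hne

theorem orthogonalIdempotents_smul_conjAverage {θ : ι → A} (hθ : OrthogonalIdempotents θ)
    (hvan : ∀ u ∉ Z, ∀ i j, θ i * ρ u * θ j = 0) :
    OrthogonalIdempotents fun i => (#Z : k)⁻¹ • conjAverage ρ (θ i) := by
  classical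
  have hmul : ∀ i j, conjAverage ρ (θ i) * conjAverage ρ (θ j) =
      (#Z : k) • conjAverage ρ (if i = j then θ i else 0) := fun i j => by
    rw [conjAverage_mul_conjAverage, sum_mul_map_mul_mul_map_inv ρ hZ (hvan · · i j), hθ.mul_eq,
      ← Nat.cast_smul_eq_nsmul k]
    simp only [conjAverage, smul_sum, mul_smul_comm, smul_mul_assoc]
  refine OrthogonalIdempotents.iff_mul_eq.mpr fun i j => ?_
  rw [smul_mul_smul_comm, hmul, smul_smul, mul_assoc, inv_mul_cancel₀ hZk, mul_one]
  split_ifs <;> simp [conjAverage]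

end

namespace PiTensorProduct

variable {R ι V : Type*} [CommRing R] [Fintype ι] [AddCommGroup V] [Module R V]

theorem map_smul_univ (c : ι → R) (L : ι → V →ₗ[R] V) :
    map (fun i => c i • L i) = (∏ i, c i) • map L := by
  ext x
  simp [MultilinearMap.map_smul_univ]

def mapSmulRight (f : ι → Dual R V) (y : ι → V) : Module.End R (⨂[R] _ : ι, V) :=
  map fun i => (f i).smulRight (y i)

theorem mapSmulRight_mul_map_mul_mapSmulRight (f f' : ι → Dual R V) (y y' : ι → V)
    (L : ι → V →ₗ[R] V) :
    mapSmulRight f y * map L * mapSmulRight f' y' =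
      (∏ i, f i (L i (y' i))) • mapSmulRight f' y := by
  rw [mapSmulRight, mapSmulRight, mapSmulRight, ← PiTensorProduct.map_mul,
    ← PiTensorProduct.map_mul, ← map_smul_univ]
  congr 1
  ext i x
  simp [smul_smul, mul_comm]

theorem mapSmulRight_mul_mapSmulRight (f f' : ι → Dual R V) (y y' : ι → V) :
    mapSmulRight f y * mapSmulRight f' y' = (∏ i, f i (y' i)) • mapSmulRight f' y := by
  simpa using mapSmulRight_mul_map_mul_mapSmulRight f f' y y' fun _ => 1

theorem mapSmulRight_ne_zero [NoZeroDivisors R] {f : ι → Dual R V} {y : ι → V}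
    (h : ∏ i, f i (y i) ≠ 0) : mapSmulRight f y ≠ 0 := by
  intro h0
  have := congr(dualDistrib (tprod R f) ($h0 (tprod R y)))
  simp [mapSmulRight, prod_mul_distrib, h] at this

end PiTensorProduct

def MonoidHom.tensorPower {k G V : Type*} [CommRing k] [Monoid G] [AddCommGroup V] [Module k V]
    (ρ : G →* Module.End k V) (n : ℕ) : G →* Module.End k (⨂[k]^n V) :=
  PiTensorProduct.mapMonoidHom.comp (MonoidHom.pi fun _ => ρ)

theorem LinearMap.exists_dual_apply_eq_one_apply_eq_zero {K V : Type*} [Field K] [AddCommGroup V]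
    [Module K V] {f : V →ₗ[K] V} (hf : ∀ c : K, f ≠ c • 1) :
    ∃ (x : V) (μ : Dual K V), μ x = 1 ∧ μ (f x) = 0 := by
  obtain ⟨x, hx⟩ : ∃ x, LinearIndependent K ![x, f x] := by
    by_contra! h
    obtain ⟨c, hc⟩ := exists_eq_smul_id_of_forall_notLinearIndependent h
    exact hf c hc
  have hmem : x ∉ Submodule.span K {f x} := by
    rw [Submodule.mem_span_singleton]
    rintro ⟨a, ha⟩
    have := (LinearIndependent.pair_iff.mp hx (-1) a (by rw [ha, neg_one_smul, neg_add_cancel])).1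
    exact one_ne_zero (neg_eq_zero.mp this)
  obtain ⟨μ, hμx, hμ⟩ := Submodule.exists_dual_map_eq_bot_of_notMem hmem inferInstance
  refine ⟨x, (μ x)⁻¹ • μ, inv_mul_cancel₀ hμx, ?_⟩
  have : μ (f x) = 0 := by
    simpa using hμ.le (Submodule.mem_map_of_mem (Submodule.mem_span_singleton_self (f x)))
  simp [this]

namespace SeparatingFamily

variable {k V S κ : Type*} [Field k] [AddCommGroup V] [Module k V] [Fintype S]
  (x : S → V) (μ : S → Dual k V) (b : Basis κ k V) {r : ℕ}

-- The first `card S` tensor factors carry the pairs `(x s, μ s)`, the last `r` the basis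
-- vectors `b (J t)` and their coordinate functionals.
def splitFin : Fin (Fintype.card S + r) ≃ S ⊕ Fin r :=
  finSumFinEquiv.symm.trans ((Fintype.equivFin S).symm.sumCongr (Equiv.refl _))

def vec (J : Fin r → κ) (i : Fin (Fintype.card S + r)) : V :=
  Sum.elim x (b ∘ J) (splitFin i)

def covec (J : Fin r → κ) (i : Fin (Fintype.card S + r)) : Dual k V :=
  Sum.elim μ (b.coord ∘ J) (splitFin i)

theorem prod_covec_apply_vec (F : V →ₗ[k] V) (J J' : Fin r → κ) :
    ∏ i, covec μ b J i (F (vec x b J' i)) =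
      (∏ s, μ s (F (x s))) * ∏ t, b.coord (J t) (F (b (J' t))) :=
  (splitFin.prod_comp fun j => Sum.elim μ (b.coord ∘ J) j (F (Sum.elim x (b ∘ J') j))).trans
    (Fintype.prod_sum_type _)

def seed (J : Fin r → κ) : Module.End k (⨂[k]^(Fintype.card S + r) V) :=
  PiTensorProduct.mapSmulRight (covec μ b J) (vec x b J)

variable {x μ}

theorem seed_mul_map_mul_seed_eq_zero {F : V →ₗ[k] V} (hF : ∃ s, μ s (F (x s)) = 0)
    (J J' : Fin r → κ) :
    seed x μ b J * PiTensorProduct.map (fun _ => F) * seed x μ b J' = 0 := by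
  obtain ⟨s, hs⟩ := hF
  rw [seed, seed, PiTensorProduct.mapSmulRight_mul_map_mul_mapSmulRight, prod_covec_apply_vec,
    prod_eq_zero (mem_univ s) hs, zero_mul, zero_smul]

variable (hx : ∀ s, μ s (x s) = 1)
include hx

theorem prod_covec_vec [DecidableEq κ] (J J' : Fin r → κ) :
    ∏ i, covec μ b J i (vec x b J' i) = if J = J' then 1 else 0 := by
  have := prod_covec_apply_vec x μ b LinearMap.id J J'
  simp only [LinearMap.id_apply, hx, prod_const_one, one_mul, Basis.coord_apply, Basis.repr_self,
    Finsupp.single_apply] at this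
  rw [this, prod_boole]
  simp [funext_iff, eq_comm]

theorem orthogonalIdempotents_seed : OrthogonalIdempotents (seed x μ b (r := r)) := by
  classical
  refine OrthogonalIdempotents.iff_mul_eq.mpr fun J J' => ?_
  rw [seed, seed, PiTensorProduct.mapSmulRight_mul_mapSmulRight, prod_covec_vec b hx]
  split_ifs with h <;> simp [h]

theorem seed_ne_zero (J : Fin r → κ) : seed x μ b J ≠ 0 := by
  classical
  exact PiTensorProduct.mapSmulRight_ne_zero (by simp [prod_covec_vec b hx])

end SeparatingFamily

namespace sN

variable {k V G : Type*} [Field k] [AddCommGroup V] [Module k V] [FiniteDimensional k V]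
  [Group G] [Fintype G] (ρ : G →* Module.End k V) {Z : Finset G} (hZk : (#Z : k) ≠ 0)
include hZk

open SeparatingFamily in
theorem finrank_pow_le_of_separating (hZ : ∀ z ∈ Z, ∃ c : k, ρ z = c • 1) {S : Type*}
    [Fintype S] {x : S → V} {μ : S → Dual k V} (hx : ∀ s, μ s (x s) = 1)
    (hsep : ∀ u ∉ Z, ∃ s, μ s (ρ u (x s)) = 0) (r : ℕ) :
    finrank k V ^ r ≤ sN k ρ (Fintype.card S + r) := by
  set b := Module.finBasis k V
  set ρn := ρ.tensorPower (Fintype.card S + r)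
  have hcentral : ∀ z ∈ Z, ∀ T, Commute (ρn z) T := fun z hz T => by
    obtain ⟨c, hc⟩ := hZ z hz
    have : ρn z = (∏ _ : Fin (Fintype.card S + r), c) • 1 := by
      rw [← PiTensorProduct.map_one, ← PiTensorProduct.map_smul_univ]
      exact congrArg PiTensorProduct.map (funext fun _ => hc)
    exact this ▸ (Commute.one_left T).smul_left _
  have hvan : ∀ u ∉ Z, ∀ J J', seed x μ b J * ρn u * seed x μ b J' = 0 :=
    fun u hu => seed_mul_map_mul_seed_eq_zero b (hsep u hu)
  have hseed := orthogonalIdempotents_seed b hx (r := r)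
  have := card_le_of_orthogonalIdempotents (ρ := ρ)
    (orthogonalIdempotents_smul_conjAverage ρn hcentral hZk hseed hvan)
    (fun J => smul_ne_zero (inv_ne_zero hZk) (conjAverage_ne_zero ρn hcentral hZk (hseed.idem J)
      (fun u hu => hvan u hu J J) (seed_ne_zero b hx J)))
    (fun J g => ((commute_conjAverage ρn g _).smul_right _).symm)
  rwa [Fintype.card_fun, Fintype.card_fin, Fintype.card_fin] at this

theorem exists_finrank_pow_le_add (hZ : ∀ g, g ∈ Z ↔ ∃ c : k, ρ g = c • 1) :
    ∃ m, ∀ r, finrank k V ^ r ≤ sN k ρ (m + r) := by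
  classical
  have : ∀ u : {u // u ∉ Z}, ∃ p : V × Dual k V, p.2 p.1 = 1 ∧ p.2 (ρ u p.1) = 0 := by
    intro u
    obtain ⟨x, μ, h1, h0⟩ :=
      LinearMap.exists_dual_apply_eq_one_apply_eq_zero fun c hc => u.2 ((hZ u).mpr ⟨c, hc⟩)
    exact ⟨(x, μ), h1, h0⟩
  choose p hp1 hp0 using this
  exact ⟨_, finrank_pow_le_of_separating ρ hZk (fun z hz => (hZ z).mp hz) hp1
    fun u hu => ⟨⟨u, hu⟩, hp0 _⟩⟩

end sN

theorem exists_pos_mul_pow_le {f : ℕ → ℕ} {d m : ℕ} (hd : 0 < d) (hf : ∀ n, 1 ≤ f n)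
    (h : ∀ r, d ^ r ≤ f (m + r)) : ∃ A : ℝ, 0 < A ∧ ∀ n, A * d ^ n ≤ f n := by
  have hd' : (1 : ℝ) ≤ d := by exact_mod_cast hd
  refine ⟨(d : ℝ)⁻¹ ^ m, by positivity, fun n => ?_⟩
  rcases le_or_gt m n with hmn | hnm
  · obtain ⟨r, rfl⟩ := Nat.exists_eq_add_of_le hmn
    calc (d : ℝ)⁻¹ ^ m * d ^ (m + r) = d ^ r := by
          rw [pow_add, ← mul_assoc, ← mul_pow, inv_mul_cancel₀ (by positivity), one_pow,
            one_mul]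
      _ ≤ f (m + r) := by exact_mod_cast h r
  · calc (d : ℝ)⁻¹ ^ m * d ^ n ≤ (d : ℝ)⁻¹ ^ m * d ^ m := by gcongr
      _ = 1 := by rw [← mul_pow, inv_mul_cancel₀ (by positivity), one_pow]
      _ ≤ f n := by exact_mod_cast hf n

theorem sN.exists_pos_mul_finrank_pow_le {k V G : Type*} [Field k] [AddCommGroup V] [Module k V]
    [FiniteDimensional k V] [Nontrivial V] [Group G] [Fintype G] (ρ : G →* Module.End k V)
    {Z : Finset G} (hZ : ∀ g, g ∈ Z ↔ ∃ c : k, ρ g = c • 1) (hZk : (#Z : k) ≠ 0) :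
    ∃ A : ℝ, 0 < A ∧ ∀ n,
      A * finrank k V ^ n ≤ sN k ρ n ∧ (sN k ρ n : ℝ) ≤ finrank k V ^ n := by
  obtain ⟨m, hm⟩ := exists_finrank_pow_le_add ρ hZk hZ
  obtain ⟨A, hA, hle⟩ := exists_pos_mul_pow_le finrank_pos (fun n => one_le (ρ := ρ) (n := n)) hm
  exact ⟨A, hA, fun n => ⟨by exact_mod_cast hle n, by exact_mod_cast le_finrank_pow ρ n⟩⟩

namespace Matrix.SpecialLinearGroup

open scoped MatrixGroups

def toEnd {n R : Type*} [Fintype n] [DecidableEq n] [CommRing R] :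
    SpecialLinearGroup n R →* Module.End R (n → R) :=
  Matrix.toLinAlgEquiv'.toMonoidHom.comp coeMonoidHom

variable {k : Type*} [Field k]

theorem toEnd_eq_smul_one_iff (g : SL(2, k)) :
    (∃ c : k, toEnd g = c • 1) ↔ g = 1 ∨ g = -1 := by
  constructor
  · rintro ⟨c, hc⟩
    have hg : (g : Matrix (Fin 2) (Fin 2) k) = c • 1 :=
      Matrix.toLin'.injective (by rw [map_smul, Matrix.toLin'_one]; exact hc)
    have hc2 : c * c = 1 := by simpa [hg, sq] using g.det_coe
    rcases mul_self_eq_one_iff.mp hc2 with rfl | rfl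
    · exact .inl (Subtype.ext (by simpa using hg))
    · exact .inr (Subtype.ext (by simpa using hg))
  · rintro (rfl | rfl)
    · exact ⟨1, by simp⟩
    · exact ⟨-1, by ext; simp [toEnd]⟩

theorem natCast_card_pair_one_neg_one_ne_zero [DecidableEq k] :
    (#({1, -1} : Finset SL(2, k)) : k) ≠ 0 := by
  by_cases h : (1 : SL(2, k)) = -1
  · simp [← h]
  · rw [card_pair h, Nat.cast_two]
    intro h2
    refine h (Subtype.ext (Matrix.ext fun i j => ?_))
    simp [eq_comm (a := (1 : Matrix (Fin 2) (Fin 2) k) i j), neg_eq_iff_add_eq_zero, ← two_mul,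
      h2]

end Matrix.SpecialLinearGroup

end

theorem stmt11 (k : Type*) [Field k] [Fintype k] :
    ∃ A : ℝ, 0 < A ∧ ∀ n : ℕ,
      A * 2 ^ n ≤ (sN k (fun g : Matrix.SpecialLinearGroup (Fin 2) k =>
        Matrix.mulVecLin (g : Matrix (Fin 2) (Fin 2) k)) n : ℝ) ∧
      (sN k (fun g : Matrix.SpecialLinearGroup (Fin 2) k =>
        Matrix.mulVecLin (g : Matrix (Fin 2) (Fin 2) k)) n : ℝ) ≤ 2 ^ n := by
  classical
  have := sN.exists_pos_mul_finrank_pow_le (k := k) (V := Fin 2 → k)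
    Matrix.SpecialLinearGroup.toEnd
    (fun g => by rw [Matrix.SpecialLinearGroup.toEnd_eq_smul_one_iff]; simp)
    Matrix.SpecialLinearGroup.natCast_card_pair_one_neg_one_ne_zero
  simp only [Module.finrank_fin_fun, Nat.cast_ofNat] at this
  exact this
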